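/- The dimension of the kernel of the Dirac operator D equals the sum Σ_k b_k of all the Betti numbers of G. -/

import Mathlib

/-!
Since `d ∘ d = 0`, the kernel of `D = d + d*` is `ker d ∩ ker d* = ker d ∩ (im d)ᗮ`, the
orthogonal complement of `im d` inside `ker d`; hence `dim ker D = dim ker d - rank d`.
Both terms split along the grading `Ω = ⊕ₖ Ωₖ`, so `dim ker D = ∑ₖ (dim ker dₖ - rank dₖ)`, and
since `rank dₖ ≤ dim ker dₖ₊₁` and the top `dₖ` vanishes, this regroups into `∑ₖ bₖ`.
-/

open Matrix Finset BigOperators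

variable {V : Type*} [Fintype V] [LinearOrder V]

/-- Incidence coefficient between finsets `t` and `s`: it is `(-1)^i` if `s` is obtained from `t`
by deleting its `i`-th vertex (in the linear order on vertices), and `0` otherwise. This encodes
the exterior derivative `(d f)(x_0,…,x_{k+1}) = ∑ i (−1)^i f(x_0,…,x̂_i,…,x_{k+1})` on simplices
whose vertices are ordered increasingly. -/
def dEntry (t s : Finset V) : ℝ :=
  ∑ v ∈ t, if s = t.erase v then (-1 : ℝ) ^ (t.filter (· < v)).card else 0

variable (G : SimpleGraph V) [DecidableRel G.Adj]

/-- The set `𝒢_k` of `k`-simplices of `G`, i.e. the complete subgraphs on `k+1` vertices,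
encoded as the `(k+1)`-cliques of `G`.  `Ω_k = Cl G k → ℝ` is the space of `k`-forms. -/
abbrev Cl (k : ℕ) := {s : Finset V // s ∈ G.cliqueFinset (k + 1)}

/-- The set `𝒢` of all simplices (nonempty complete subgraphs) of `G`; the total space of forms
is `Ω = ⊕_k Ω_k = Simp G → ℝ`. -/
abbrev Simp := {s : Finset V // s.Nonempty ∧ s ∈ G.cliqueFinset s.card}

/-- The exterior derivative `d_k : Ω_k → Ω_{k+1}` as a matrix (its transpose is `d_k^*`). -/
def dMat (k : ℕ) : Matrix (Cl G (k + 1)) (Cl G k) ℝ := fun t s => dEntry t.1 s.1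

/-- The Laplace–Beltrami block `L_p = d_p^* d_p + d_{p-1} d_{p-1}^*` on `Ω_p` (with `d_{-1} = 0`). -/
def Lmat : (p : ℕ) → Matrix (Cl G p) (Cl G p) ℝ
  | 0 => (dMat G 0)ᵀ * dMat G 0
  | (k + 1) => (dMat G (k + 1))ᵀ * dMat G (k + 1) + dMat G k * (dMat G k)ᵀ

/-- The total exterior derivative `d = ⊕_k d_k` on `Ω`, as a matrix on the simplex set. -/
def dTot : Matrix (Simp G) (Simp G) ℝ := fun t s => dEntry t.1 s.1

/-- The Dirac operator `D = d + d^*` of `G`, as a symmetric matrix on the simplex set. -/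
def Dmat : Matrix (Simp G) (Simp G) ℝ := dTot G + (dTot G)ᵀ

/-- The Euler characteristic `χ(G) = ∑_k (−1)^k v_k = ∑_{x ∈ 𝒢} (−1)^{dim x}`. -/
def chi : ℤ := ∑ s : Simp G, (-1) ^ (s.1.card - 1)

/-- The supertrace `str(A) = tr(γ A)` where `γ` acts by `(−1)^k` on `Ω_k`. -/
def str {R : Type*} [CommRing R] (A : Matrix (Simp G) (Simp G) R) : R :=
  ∑ s : Simp G, (-1) ^ (s.1.card - 1) * A s s

/-- The `k`-th Betti number `b_k = dim ker d_k − rank d_{k−1}` (with `d_{−1} = 0`). -/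
noncomputable def betti : ℕ → ℕ
  | 0 => Module.finrank ℝ (LinearMap.ker (dMat G 0).mulVecLin)
  | (k + 1) => Module.finrank ℝ (LinearMap.ker (dMat G (k + 1)).mulVecLin) - (dMat G k).rank

theorem Finset.sum_sum_eq_zero_of_antisymm {ι M : Type*} [AddCommGroup M] [IsAddTorsionFree M]
    {s : Finset ι} {f : ι → ι → M} (hf : ∀ i ∈ s, ∀ j ∈ s, f i j = -f j i) :
    ∑ i ∈ s, ∑ j ∈ s, f i j = 0 := by
  refine self_eq_neg.1 ?_
  calc ∑ i ∈ s, ∑ j ∈ s, f i j = ∑ j ∈ s, ∑ i ∈ s, f i j := Finset.sum_comm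
    _ = -∑ i ∈ s, ∑ j ∈ s, f i j := by
      simp only [← Finset.sum_neg_distrib]
      exact Finset.sum_congr rfl fun j hj => Finset.sum_congr rfl fun i hi => hf i hi j hj

theorem Submodule.finrank_pi_univ {ι R : Type*} [Fintype ι] [DivisionRing R] {φ : ι → Type*}
    [∀ i, AddCommGroup (φ i)] [∀ i, Module R (φ i)] [∀ i, FiniteDimensional R (φ i)]
    (p : ∀ i, Submodule R (φ i)) :
    Module.finrank R (Submodule.pi Set.univ p) = ∑ i, Module.finrank R (p i) := by
  let e : Submodule.pi Set.univ p ≃ₗ[R] ∀ i, p i :=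
    { toFun x i := ⟨x.1 i, x.2 i trivial⟩
      invFun y := ⟨fun i => y i, fun i _ => (y i).2⟩
      map_add' _ _ := rfl
      map_smul' _ _ := rfl
      left_inv _ := rfl
      right_inv _ := rfl }
  rw [e.finrank_eq, Module.finrank_pi_fintype]

theorem Matrix.rank_add_finrank_ker_mulVecLin {m n R : Type*} [Fintype n] [Field R]
    (A : Matrix m n R) :
    A.rank + Module.finrank R (LinearMap.ker A.mulVecLin) = Fintype.card n := by
  rw [Matrix.rank, LinearMap.finrank_range_add_finrank_ker, Module.finrank_fintype_fun_eq_card]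

section SquareZero

variable {m n R : Type*} [Fintype m] [Fintype n] [Field R] [LinearOrder R] [IsStrictOrderedRing R]

theorem Matrix.ker_mulVecLin_inf_range_transpose (A : Matrix m n R) :
    LinearMap.ker A.mulVecLin ⊓ LinearMap.range Aᵀ.mulVecLin = ⊥ := by
  rw [Submodule.eq_bot_iff]
  rintro _ ⟨hx, y, rfl⟩
  have hy : y ∈ LinearMap.ker (Aᵀᵀ * Aᵀ).mulVecLin := by
    rw [LinearMap.mem_ker, mulVecLin_apply, transpose_transpose, ← mulVec_mulVec]
    exact hx
  rw [ker_mulVecLin_transpose_mul_self] at hy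
  exact hy

theorem Matrix.ker_add_transpose_mulVecLin {A : Matrix n n R} (hA : A * A = 0) :
    LinearMap.ker (A + Aᵀ).mulVecLin = LinearMap.ker A.mulVecLin ⊓ LinearMap.ker Aᵀ.mulVecLin := by
  ext x
  simp only [Submodule.mem_inf, LinearMap.mem_ker, mulVecLin_apply, add_mulVec]
  refine ⟨fun h => ?_, fun ⟨h₁, h₂⟩ => by rw [h₁, h₂, add_zero]⟩
  have hAx : A *ᵥ x = 0 := by
    have : x ∈ LinearMap.ker (Aᵀ * A).mulVecLin := by
      rw [LinearMap.mem_ker, mulVecLin_apply, ← mulVec_mulVec, eq_neg_of_add_eq_zero_left h,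
        mulVec_neg, mulVec_mulVec, ← transpose_mul, hA, transpose_zero, zero_mulVec, neg_zero]
    rwa [ker_mulVecLin_transpose_mul_self] at this
  exact ⟨hAx, by rwa [hAx, zero_add] at h⟩

theorem Matrix.finrank_ker_add_transpose_mulVecLin_add_rank {A : Matrix n n R} (hA : A * A = 0) :
    Module.finrank R (LinearMap.ker (A + Aᵀ).mulVecLin) + A.rank =
      Module.finrank R (LinearMap.ker A.mulVecLin) := by
  set K := LinearMap.ker A.mulVecLin
  set K' := LinearMap.ker Aᵀ.mulVecLin
  have hRK' : LinearMap.range Aᵀ.mulVecLin ≤ K' := by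
    rintro _ ⟨y, rfl⟩
    rw [LinearMap.mem_ker, mulVecLin_apply, mulVecLin_apply, mulVec_mulVec, ← transpose_mul, hA,
      transpose_zero, zero_mulVec]
  have hsup : K ⊔ K' = ⊤ := by
    refine eq_top_mono (sup_le_sup_left hRK' K) (Submodule.eq_top_of_finrank_eq ?_)
    have hdim := Submodule.finrank_sup_add_finrank_inf_eq K (LinearMap.range Aᵀ.mulVecLin)
    rw [ker_mulVecLin_inf_range_transpose, finrank_bot, add_zero] at hdim
    have hA := A.rank_add_finrank_ker_mulVecLin
    rw [← rank_transpose] at hA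
    rw [Module.finrank_fintype_fun_eq_card, hdim, ← hA, add_comm]
    rfl
  have hdim := Submodule.finrank_sup_add_finrank_inf_eq K K'
  rw [hsup, finrank_top, Module.finrank_fintype_fun_eq_card, ← ker_add_transpose_mulVecLin hA]
    at hdim
  have hA' : A.rank + Module.finrank R K' = Fintype.card n := by
    rw [← rank_transpose]
    exact Aᵀ.rank_add_finrank_ker_mulVecLin
  omega

end SquareZero

section Incidence

def incidenceSign (t : Finset V) (v : V) : ℝ := (-1) ^ (t.filter (· < v)).card

omit [Fintype V] in
theorem incidenceSign_erase_of_lt {t : Finset V} {v w : V} (hv : v ∈ t) (hvw : v < w) :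
    incidenceSign (t.erase v) w = -incidenceSign t w := by
  have hcard : ((t.erase v).filter (· < w)).card + 1 = (t.filter (· < w)).card := by
    rw [Finset.filter_erase, Finset.card_erase_add_one (by simp [hv, hvw])]
  rw [incidenceSign, incidenceSign, ← hcard, pow_succ, mul_neg_one, neg_neg]

omit [Fintype V] in
theorem incidenceSign_erase_of_gt {t : Finset V} {v w : V} (hwv : w < v) :
    incidenceSign (t.erase v) w = incidenceSign t w := by
  rw [incidenceSign, incidenceSign, Finset.filter_erase,
    Finset.erase_eq_of_notMem (by simp [hwv.not_gt])]

omit [Fintype V] in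
theorem exists_eq_erase_of_dEntry_ne_zero {t s : Finset V} (h : dEntry t s ≠ 0) :
    ∃ v ∈ t, s = t.erase v := by
  contrapose! h
  exact Finset.sum_eq_zero fun v hv => if_neg (h v hv)

omit [Fintype V] in
theorem subset_of_dEntry_ne_zero {t s : Finset V} (h : dEntry t s ≠ 0) : s ⊆ t := by
  obtain ⟨v, -, rfl⟩ := exists_eq_erase_of_dEntry_ne_zero h
  exact Finset.erase_subset v t

omit [Fintype V] in
theorem card_add_one_of_dEntry_ne_zero {t s : Finset V} (h : dEntry t s ≠ 0) :
    s.card + 1 = t.card := by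
  obtain ⟨v, hv, rfl⟩ := exists_eq_erase_of_dEntry_ne_zero h
  exact Finset.card_erase_add_one hv

theorem sum_dEntry_mul (t : Finset V) (f : Finset V → ℝ) :
    ∑ s, dEntry t s * f s = ∑ v ∈ t, incidenceSign t v * f (t.erase v) := by
  simp only [dEntry, Finset.sum_mul, ite_mul, zero_mul]
  rw [Finset.sum_comm]
  exact Finset.sum_congr rfl fun v _ => Fintype.sum_ite_eq' _ _

omit [Fintype V] in
/-- The combinatorial core of `d ∘ d = 0`: removing two vertices in either order gives the
same face with opposite signs. -/
theorem sum_incidenceSign_mul_dEntry_erase (t s : Finset V) :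
    ∑ v ∈ t, incidenceSign t v * dEntry (t.erase v) s = 0 := by
  set Q : V → V → ℝ := fun v w => if v = w then 0 else
    incidenceSign t v * if s = (t.erase v).erase w then incidenceSign (t.erase v) w else 0
  have hQ : ∀ v ∈ t, incidenceSign t v * dEntry (t.erase v) s = ∑ w ∈ t, Q v w := by
    intro v _
    rw [dEntry, Finset.mul_sum, ← Finset.sum_erase t (if_pos rfl : Q v v = 0)]
    exact Finset.sum_congr rfl fun w hw => (if_neg (Finset.ne_of_mem_erase hw).symm).symm
  have hQ_lt : ∀ v ∈ t, ∀ w, v < w → Q v w = -Q w v := by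
    intro v hv w hvw
    simp only [Q, if_neg hvw.ne, if_neg hvw.ne', Finset.erase_right_comm (a := v),
      incidenceSign_erase_of_lt hv hvw, incidenceSign_erase_of_gt hvw]
    split_ifs <;> ring
  rw [Finset.sum_congr rfl hQ]
  refine Finset.sum_sum_eq_zero_of_antisymm fun v hv w hw => ?_
  rcases lt_trichotomy v w with hvw | rfl | hwv
  · exact hQ_lt v hv w hvw
  · simp [Q]
  · rw [hQ_lt w hw v hwv, neg_neg]

end Incidence

theorem mem_cliqueFinset_card_iff {s : Finset V} :
    s ∈ G.cliqueFinset s.card ↔ G.IsClique (s : Set V) := by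
  simp [SimpleGraph.mem_cliqueFinset_iff, SimpleGraph.isNClique_iff]

theorem mem_cliqueFinset_of_dEntry_ne_zero {n : ℕ} {t s : Finset V}
    (ht : t ∈ G.cliqueFinset (n + 1)) (h : dEntry t s ≠ 0) : s ∈ G.cliqueFinset n := by
  rw [SimpleGraph.mem_cliqueFinset_iff, SimpleGraph.isNClique_iff] at ht ⊢
  refine ⟨ht.1.subset (by exact_mod_cast subset_of_dEntry_ne_zero h), ?_⟩
  have := card_add_one_of_dEntry_ne_zero h
  omega

theorem sum_subtype_dEntry_mul_dEntry {p : Finset V → Prop} [Fintype {u // p u}]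
    (t s : Finset V) (hp : ∀ u, dEntry t u ≠ 0 → dEntry u s ≠ 0 → p u) :
    ∑ u : {u // p u}, dEntry t u * dEntry u s = 0 := by
  rw [Fintype.sum_of_injective Subtype.val Subtype.val_injective _
    (fun u => dEntry t u * dEntry u s) ?_ fun _ => rfl, sum_dEntry_mul,
    sum_incidenceSign_mul_dEntry_erase]
  intro u hu
  by_contra h
  obtain ⟨htu, hus⟩ := mul_ne_zero_iff.1 h
  exact hu ⟨⟨u, hp u htu hus⟩, rfl⟩

theorem dTot_mul_self : dTot G * dTot G = 0 := by
  ext t s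
  rw [mul_apply, Matrix.zero_apply]
  refine sum_subtype_dEntry_mul_dEntry t.1 s.1 fun u htu hus => ⟨?_, ?_⟩
  · obtain ⟨v, hv, -⟩ := exists_eq_erase_of_dEntry_ne_zero hus
    exact ⟨v, hv⟩
  · exact (mem_cliqueFinset_card_iff G).2 <| ((mem_cliqueFinset_card_iff G).1 t.2.2).subset <| by
      exact_mod_cast subset_of_dEntry_ne_zero htu

theorem dMat_succ_mul_dMat (k : ℕ) : dMat G (k + 1) * dMat G k = 0 := by
  ext t s
  rw [mul_apply, Matrix.zero_apply]
  exact sum_subtype_dEntry_mul_dEntry t.1 s.1 fun u htu _ =>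
    mem_cliqueFinset_of_dEntry_ne_zero G t.2 htu

theorem rank_dMat_le_finrank_ker_dMat_succ (k : ℕ) :
    (dMat G k).rank ≤ Module.finrank ℝ (LinearMap.ker (dMat G (k + 1)).mulVecLin) :=
  Submodule.finrank_mono <| LinearMap.range_le_ker_iff.2 <| by
    rw [← mulVecLin_mul, dMat_succ_mul_dMat, mulVecLin_zero]

theorem rank_dMat_eq_zero {k : ℕ} (hk : Fintype.card V ≤ k + 1) : (dMat G k).rank = 0 := by
  have hempty : G.cliqueFinset (k + 1 + 1) = ∅ :=
    SimpleGraph.cliqueFinset_eq_empty_iff.2 (SimpleGraph.cliqueFree_of_card_lt (by omega))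
  have hcard : Fintype.card (Cl G (k + 1)) = 0 := by simp [hempty]
  exact Nat.eq_zero_of_le_zero (hcard ▸ (dMat G k).rank_le_card_height)

def toSimp (k : ℕ) (s : Cl G k) : Simp G :=
  ⟨s.1, by
    have hcard : s.1.card = k + 1 := (SimpleGraph.mem_cliqueFinset_iff.1 s.2).card_eq
    exact ⟨Finset.card_pos.1 (by omega), by rw [hcard]; exact s.2⟩⟩

theorem toSimp_injective (k : ℕ) : Function.Injective (toSimp G k) :=
  fun _ _ h => Subtype.ext (congrArg (fun s : Simp G => s.1) h)

theorem dTot_mulVec_toSimp (k : ℕ) (x : Simp G → ℝ) (t : Cl G (k + 1)) :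
    (dTot G *ᵥ x) (toSimp G (k + 1) t) = (dMat G k *ᵥ (x ∘ toSimp G k)) t := by
  refine (Fintype.sum_of_injective (toSimp G k) (toSimp_injective G k) _ _ ?_ fun _ => rfl).symm
  intro u hu
  by_contra h
  exact hu ⟨⟨u.1, mem_cliqueFinset_of_dEntry_ne_zero G t.2 (left_ne_zero_of_mul h)⟩, rfl⟩

theorem dTot_mulVec_of_card_eq_one (x : Simp G → ℝ) {t : Simp G} (ht : t.1.card = 1) :
    (dTot G *ᵥ x) t = 0 := by
  refine Finset.sum_eq_zero fun u _ => ?_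
  have : dEntry t.1 u.1 = 0 := by
    by_contra h
    have := card_add_one_of_dEntry_ne_zero h
    have := u.2.1.card_pos
    omega
  exact mul_eq_zero_of_left this (x u)

section Grading

variable {N : ℕ}

def simpEquivSigma (hN : Fintype.card V ≤ N) : Simp G ≃ Σ k : Fin N, Cl G k :=
  (Equiv.sigmaFiberEquiv fun s : Simp G => (⟨s.1.card - 1, by
      have := s.1.card_le_univ; have := s.2.1.card_pos; omega⟩ : Fin N)).symm.trans
    (Equiv.sigmaCongrRight fun k =>
      { toFun s := ⟨s.1.1, by
          have hk : s.1.1.card - 1 = k := congrArg Fin.val s.2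
          have := s.1.2.1.card_pos
          rw [show k.1 + 1 = s.1.1.card by omega]
          exact s.1.2.2⟩
        invFun s := ⟨toSimp G k s, Fin.ext <| by
          simp [toSimp, (SimpleGraph.mem_cliqueFinset_iff.1 s.2).card_eq]⟩
        left_inv _ := rfl
        right_inv _ := rfl })

theorem card_simp_eq_sum_card_cl (hN : Fintype.card V ≤ N) :
    Fintype.card (Simp G) = ∑ k ∈ Finset.range N, Fintype.card (Cl G k) := by
  rw [Fintype.card_congr (simpEquivSigma G hN), Fintype.card_sigma,
    Fin.sum_univ_eq_sum_range (fun k => Fintype.card (Cl G k))]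

def formsEquivPi (hN : Fintype.card V ≤ N) : (Simp G → ℝ) ≃ₗ[ℝ] ∀ k : Fin N, Cl G k → ℝ :=
  (LinearEquiv.funCongrLeft ℝ ℝ (simpEquivSigma G hN).symm).trans
    (LinearEquiv.piCurry ℝ fun _ _ => ℝ)

theorem formsEquivPi_apply (hN : Fintype.card V ≤ N) (x : Simp G → ℝ) (k : Fin N) :
    formsEquivPi G hN x k = x ∘ toSimp G k :=
  rfl

theorem dTot_mulVec_eq_zero_iff (hN : Fintype.card V ≤ N) (x : Simp G → ℝ) :
    dTot G *ᵥ x = 0 ↔ ∀ k : Fin N, dMat G k *ᵥ (x ∘ toSimp G k) = 0 := by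
  refine ⟨fun h k => funext fun t => by rw [← dTot_mulVec_toSimp, h]; rfl,
    fun h => funext fun t => ?_⟩
  obtain ⟨m, hm⟩ := Nat.exists_eq_add_one.2 t.2.1.card_pos
  cases m with
  | zero => exact dTot_mulVec_of_card_eq_one G x hm
  | succ m =>
    have ht : t.1 ∈ G.cliqueFinset (m + 1 + 1) := by rw [← hm]; exact t.2.2
    have hmN : m < N := by have := t.1.card_le_univ; omega
    have := dTot_mulVec_toSimp G m x ⟨t.1, ht⟩
    rwa [h ⟨m, hmN⟩] at this

theorem finrank_ker_dTot (hN : Fintype.card V ≤ N) :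
    Module.finrank ℝ (LinearMap.ker (dTot G).mulVecLin) =
      ∑ k ∈ Finset.range N, Module.finrank ℝ (LinearMap.ker (dMat G k).mulVecLin) := by
  have hker : LinearMap.ker (dTot G).mulVecLin =
      (Submodule.pi Set.univ fun k : Fin N => LinearMap.ker (dMat G k).mulVecLin).comap
        (formsEquivPi G hN : (Simp G → ℝ) →ₗ[ℝ] _) := by
    ext x
    simpa [formsEquivPi_apply] using dTot_mulVec_eq_zero_iff G hN x
  rw [hker, Submodule.comap_equiv_eq_map_symm, LinearEquiv.finrank_map_eq,
    Submodule.finrank_pi_univ,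
    Fin.sum_univ_eq_sum_range (fun k => Module.finrank ℝ (LinearMap.ker (dMat G k).mulVecLin))]

theorem rank_dTot (hN : Fintype.card V ≤ N) :
    (dTot G).rank = ∑ k ∈ Finset.range N, (dMat G k).rank := by
  have h := (dTot G).rank_add_finrank_ker_mulVecLin
  rw [finrank_ker_dTot G hN, card_simp_eq_sum_card_cl G hN,
    ← Finset.sum_congr rfl fun k _ => (dMat G k).rank_add_finrank_ker_mulVecLin,
    Finset.sum_add_distrib] at h
  omega

end Grading

theorem sum_range_succ_betti_add_sum_range_rank (M : ℕ) :
    ∑ k ∈ Finset.range (M + 1), betti G k + ∑ k ∈ Finset.range M, (dMat G k).rank =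
      ∑ k ∈ Finset.range (M + 1), Module.finrank ℝ (LinearMap.ker (dMat G k).mulVecLin) := by
  induction M with
  | zero => simp [betti]
  | succ M ih =>
    rw [Finset.sum_range_succ (betti G), Finset.sum_range_succ (fun k => (dMat G k).rank),
      Finset.sum_range_succ (fun k => Module.finrank ℝ (LinearMap.ker (dMat G k).mulVecLin)), betti]
    have := rank_dMat_le_finrank_ker_dMat_succ G M
    omega

theorem sum_range_betti_add_sum_range_rank {N : ℕ} (hN : Fintype.card V ≤ N) :
    ∑ k ∈ Finset.range N, betti G k + ∑ k ∈ Finset.range N, (dMat G k).rank =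
      ∑ k ∈ Finset.range N, Module.finrank ℝ (LinearMap.ker (dMat G k).mulVecLin) := by
  cases N with
  | zero => simp
  | succ M =>
    rw [Finset.sum_range_succ (fun k => (dMat G k).rank), rank_dMat_eq_zero G hN, add_zero]
    exact sum_range_succ_betti_add_sum_range_rank G M

/-- The dimension of the kernel of the Dirac operator `D` equals the sum `∑_k b_k` of all
Betti numbers of `G` (the sum over all `k` equals the sum over `k < N` for any
`N ≥ |V|`, since all higher terms vanish). -/
theorem dim_ker_dirac_eq_sum_betti (N : ℕ) (hN : Fintype.card V ≤ N) :
    Module.finrank ℝ (LinearMap.ker (Dmat G).mulVecLin) = ∑ k ∈ Finset.range N, betti G k := by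
  have hD := Matrix.finrank_ker_add_transpose_mulVecLin_add_rank (dTot_mul_self G)
  have hZ := finrank_ker_dTot G hN
  have hR := rank_dTot G hN
  have hB := sum_range_betti_add_sum_range_rank G hN
  rw [Dmat]
  omega
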